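/- With the notation of the context, if β < α ≤ ((λ₁+λ₂)/(1+λ₁λ₂))·β < 0, then Φ(1) ∈ (−2π, −π]. (This is case '−1' of Lemma 2.8: for lifts A, B of τ_{∞,0}(λ₁), τ_{α,β}(λ₂) to the m-fold covering group of PSL(2,ℝ), lev_m(A·B) − lev_m(A) − lev_m(B) = −1.) -/

import Mathlib

/-- `λ(t) = 1 + t(λ−1)`, deforming the shift parameter from `1` to `λ`. -/
noncomputable def lamt (l t : ℝ) : ℝ := 1 + t * (l - 1)

/-- The hyperbolic element `τ_{∞,0}(λ₁(t))` of `SL(2,ℝ)` as a matrix. -/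
noncomputable def matA (l1 t : ℝ) : Matrix (Fin 2) (Fin 2) ℝ :=
  !![Real.sqrt (lamt l1 t), 0; 0, (Real.sqrt (lamt l1 t))⁻¹]

/-- The hyperbolic element `τ_{α,β}(λ₂(t))` of `SL(2,ℝ)` with fixed points `α`, `β`. -/
noncomputable def matB (l2 α β t : ℝ) : Matrix (Fin 2) (Fin 2) ℝ :=
  ((α - β) * Real.sqrt (lamt l2 t))⁻¹ •
    !![lamt l2 t * α - β, -((lamt l2 t - 1) * α * β);
       lamt l2 t - 1, α - lamt l2 t * β]

/-- The product path `M(t) = A(t)·B(t)`. -/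
noncomputable def matM (l1 l2 α β t : ℝ) : Matrix (Fin 2) (Fin 2) ℝ :=
  matA l1 t * matB l2 α β t

/-- `w(t) = (a(t)+d(t)) + i(b(t)−c(t))`. -/
noncomputable def wfun (l1 l2 α β t : ℝ) : ℂ :=
  ((matM l1 l2 α β t 0 0 + matM l1 l2 α β t 1 1 : ℝ) : ℂ) +
    Complex.I * ((matM l1 l2 α β t 0 1 - matM l1 l2 α β t 1 0 : ℝ) : ℂ)


/-
Up to the positive factor `wDenom = (α - β) √λ₁(t) √λ₂(t)`, `w(t) = reNum(t) + i imNum(t)`, where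
`imNum(t) < 0` for `t > 0`, `reNum(0) = 2(α - β) > 0` and, in this case,
`reNum(1) = (1 + λ₁λ₂)α - (λ₁ + λ₂)β ≤ 0`. Since `e^{iΦ} = w² / |w|²`, `Φ(t)` avoids `2πℤ` for
`t > 0` and `sin Φ < 0` while `reNum > 0`; so `Φ` leaves `0` downwards and stays trapped in
`(-2π, 0)`, where `sin Φ(1) ≥ 0` forces `Φ(1) ≤ -π`.
-/

open Complex Filter Set Topology

namespace Complex

variable {φ : ℝ} {w : ℂ}

theorem ne_zero_of_exp_eq (h : exp (I * φ) = (w / ‖w‖) ^ 2) : w ≠ 0 := by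
  rintro rfl
  simp [exp_ne_zero] at h

theorem exp_I_mul_mul_normSq_eq_sq (h : exp (I * φ) = (w / ‖w‖) ^ 2) :
    exp (I * φ) * normSq w = w ^ 2 := by
  have hw : (‖w‖ : ℂ) ≠ 0 := by simpa using ne_zero_of_exp_eq h
  rw [h, normSq_eq_norm_sq]
  push_cast
  field_simp

theorem sin_mul_normSq_of_exp_eq (h : exp (I * φ) = (w / ‖w‖) ^ 2) :
    Real.sin φ * normSq w = 2 * (w.re * w.im) := by
  have := congrArg im (exp_I_mul_mul_normSq_eq_sq h)
  rw [mul_comm I, im_mul_ofReal, exp_ofReal_mul_I_im] at this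
  simp only [sq, mul_im] at this
  linarith

theorem sin_neg_of_exp_eq (h : exp (I * φ) = (w / ‖w‖) ^ 2) (hw : w.re * w.im < 0) :
    Real.sin φ < 0 :=
  neg_of_mul_neg_left (by linarith [sin_mul_normSq_of_exp_eq h]) (normSq_nonneg w)

theorem sin_nonneg_of_exp_eq (h : exp (I * φ) = (w / ‖w‖) ^ 2) (hw : 0 ≤ w.re * w.im) :
    0 ≤ Real.sin φ :=
  nonneg_of_mul_nonneg_left (by linarith [sin_mul_normSq_of_exp_eq h])
    (normSq_pos.2 (ne_zero_of_exp_eq h))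

theorem cos_ne_one_of_exp_eq (h : exp (I * φ) = (w / ‖w‖) ^ 2) (hw : w.im ≠ 0) :
    Real.cos φ ≠ 1 := by
  intro hcos
  have := congrArg re (exp_I_mul_mul_normSq_eq_sq h)
  rw [mul_comm I, re_mul_ofReal, exp_ofReal_mul_I_re, hcos, one_mul, normSq_apply] at this
  simp only [sq, mul_re] at this
  exact hw (by nlinarith)

end Complex

open scoped Real

theorem ContinuousOn.mem_Ioo_of_forall_ne {f : ℝ → ℝ} {a b x y : ℝ} (hab : a ≤ b)
    (hf : ContinuousOn f (Icc a b)) (hx : ∀ t ∈ Icc a b, f t ≠ x)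
    (hy : ∀ t ∈ Icc a b, f t ≠ y) (ha : f a ∈ Ioo x y) : f b ∈ Ioo x y := by
  have himage := isPreconnected_Icc.image f hf
  have hfa : f a ∈ f '' Icc a b := mem_image_of_mem f (left_mem_Icc.2 hab)
  have hfb : f b ∈ f '' Icc a b := mem_image_of_mem f (right_mem_Icc.2 hab)
  constructor
  · by_contra! hbx
    obtain ⟨t, ht, hft⟩ := himage.Icc_subset hfb hfa ⟨hbx, ha.1.le⟩
    exact hx t ht hft
  · by_contra! hby
    obtain ⟨t, ht, hft⟩ := himage.Icc_subset hfa hfb ⟨ha.2.le, hby⟩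
    exact hy t ht hft

theorem eventually_mem_Ioo_neg_pi_zero {Φ : ℝ → ℝ} {l : Filter ℝ}
    (hΦ : Tendsto Φ l (𝓝 0)) (hsin : ∀ᶠ t in l, Real.sin (Φ t) < 0) :
    ∀ᶠ t in l, Φ t ∈ Ioo (-π) 0 := by
  filter_upwards [hΦ.eventually (Ioo_mem_nhds (neg_neg_of_pos Real.pi_pos) Real.pi_pos), hsin]
    with t hlt hsin
  refine ⟨hlt.1, ?_⟩
  by_contra! h
  exact hsin.not_ge (Real.sin_nonneg_of_nonneg_of_le_pi h hlt.2.le)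

theorem mem_Ioc_neg_two_pi_neg_pi_of_lift {Φ : ℝ → ℝ} {b : ℝ} (hb : 0 < b)
    (hc : ContinuousOn Φ (Icc 0 b)) (h0 : Φ 0 = 0)
    (hcos : ∀ t ∈ Ioc 0 b, Real.cos (Φ t) ≠ 1)
    (hsin : ∀ᶠ t in 𝓝[>] 0, Real.sin (Φ t) < 0) (hsinb : 0 ≤ Real.sin (Φ b)) :
    Φ b ∈ Ioc (-(2 * π)) (-π) := by
  have hlim : Tendsto Φ (𝓝[>] 0) (𝓝 0) := by
    simpa only [ContinuousWithinAt, h0] using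
      (hc 0 (left_mem_Icc.2 hb.le)).mono_of_mem_nhdsWithin (Icc_mem_nhdsGT hb)
  obtain ⟨t₀, hΦt₀, ht₀⟩ :=
    ((eventually_mem_Ioo_neg_pi_zero hlim hsin).and (Ioo_mem_nhdsGT hb)).exists
  have hΦb : Φ b ∈ Ioo (-(2 * π)) 0 := by
    refine (hc.mono (Icc_subset_Icc_left ht₀.1.le)).mem_Ioo_of_forall_ne ht₀.2.le
      (fun t ht h => hcos t ⟨ht₀.1.trans_le ht.1, ht.2⟩ ?_)
      (fun t ht h => hcos t ⟨ht₀.1.trans_le ht.1, ht.2⟩ ?_)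
      ⟨by linarith [hΦt₀.1, Real.pi_pos], hΦt₀.2⟩
    · rw [h, Real.cos_neg, Real.cos_two_pi]
    · rw [h, Real.cos_zero]
  refine ⟨hΦb.1, ?_⟩
  by_contra! h
  exact hsinb.not_gt (Real.sin_neg_of_neg_of_neg_pi_lt hΦb.2 h)

theorem one_le_lamt {l t : ℝ} (hl : 1 ≤ l) (ht : 0 ≤ t) : 1 ≤ lamt l t := by
  unfold lamt
  nlinarith

theorem one_lt_lamt {l t : ℝ} (hl : 1 < l) (ht : 0 < t) : 1 < lamt l t := by
  unfold lamt
  nlinarith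

@[simp]
theorem lamt_one (l : ℝ) : lamt l 1 = l := by
  simp [lamt]

section ProductPath

variable (l1 l2 α β : ℝ)

noncomputable def wDenom (t : ℝ) : ℝ := (α - β) * √(lamt l1 t) * √(lamt l2 t)

noncomputable def reNum (t : ℝ) : ℝ :=
  lamt l1 t * (lamt l2 t * α - β) + (α - lamt l2 t * β)

noncomputable def imNum (t : ℝ) : ℝ :=
  -((lamt l2 t - 1) * (lamt l1 t * α * β + 1))

theorem reNum_zero : reNum l1 l2 α β 0 = 2 * (α - β) := by
  simp only [reNum, lamt]
  ring

theorem reNum_one : reNum l1 l2 α β 1 = (1 + l1 * l2) * α - (l1 + l2) * β := by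
  simp only [reNum, lamt_one]
  ring

theorem continuous_reNum : Continuous (reNum l1 l2 α β) := by
  unfold reNum lamt
  fun_prop

variable {l1 l2 α β} {t : ℝ}

theorem wDenom_pos (hβα : β < α) (h1 : 0 < lamt l1 t) (h2 : 0 < lamt l2 t) :
    0 < wDenom l1 l2 α β t :=
  mul_pos (mul_pos (sub_pos.2 hβα) (Real.sqrt_pos.2 h1)) (Real.sqrt_pos.2 h2)

theorem imNum_neg (hl1 : 1 ≤ l1) (hl2 : 1 < l2) (hαβ : 0 < α * β) (ht : 0 < t) :
    imNum l1 l2 α β t < 0 := by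
  have h1 := one_le_lamt hl1 ht.le
  have h2 := one_lt_lamt hl2 ht
  unfold imNum
  nlinarith [mul_pos (sub_pos.2 h2) (by nlinarith : 0 < lamt l1 t * α * β + 1)]

theorem wfun_re (h1 : 0 < lamt l1 t) :
    (wfun l1 l2 α β t).re = reNum l1 l2 α β t / wDenom l1 l2 α β t := by
  have hre : (wfun l1 l2 α β t).re = matM l1 l2 α β t 0 0 + matM l1 l2 α β t 1 1 := by
    simp [wfun]
  have hsq : √(lamt l1 t) ^ 2 = lamt l1 t := Real.sq_sqrt h1.le
  have hs1 : √(lamt l1 t) ≠ 0 := (Real.sqrt_pos.2 h1).ne'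
  simp [hre, matM, matA, matB, Matrix.mul_apply, Fin.sum_univ_two, reNum, wDenom]
  -- abstract `√λ₁` first, so that `← hsq` does not also rewrite under the root
  set s := √(lamt l1 t)
  rw [← hsq]
  field_simp

theorem wfun_im (h1 : 0 < lamt l1 t) :
    (wfun l1 l2 α β t).im = imNum l1 l2 α β t / wDenom l1 l2 α β t := by
  have him : (wfun l1 l2 α β t).im = matM l1 l2 α β t 0 1 - matM l1 l2 α β t 1 0 := by
    simp [wfun]
  have hsq : √(lamt l1 t) ^ 2 = lamt l1 t := Real.sq_sqrt h1.le
  have hs1 : √(lamt l1 t) ≠ 0 := (Real.sqrt_pos.2 h1).ne'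
  simp [him, matM, matA, matB, Matrix.mul_apply, Fin.sum_univ_two, imNum, wDenom]
  set s := √(lamt l1 t)
  rw [← hsq]
  field_simp
  ring

theorem wfun_im_neg (hl1 : 1 ≤ l1) (hl2 : 1 < l2) (hβα : β < α) (hαβ : 0 < α * β)
    (ht : 0 < t) : (wfun l1 l2 α β t).im < 0 := by
  have h1 : 0 < lamt l1 t := one_pos.trans_le (one_le_lamt hl1 ht.le)
  have h2 : 0 < lamt l2 t := one_pos.trans (one_lt_lamt hl2 ht)
  rw [wfun_im h1]
  exact div_neg_of_neg_of_pos (imNum_neg hl1 hl2 hαβ ht) (wDenom_pos hβα h1 h2)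

theorem eventually_wfun_re_pos (hl1 : 1 ≤ l1) (hl2 : 1 ≤ l2) (hβα : β < α) :
    ∀ᶠ t in 𝓝[>] 0, 0 < (wfun l1 l2 α β t).re := by
  have hP0 : 0 < reNum l1 l2 α β 0 := by
    rw [reNum_zero]
    linarith
  filter_upwards [nhdsWithin_le_nhds ((continuous_reNum l1 l2 α β).continuousAt.eventually
    (eventually_gt_nhds hP0)), self_mem_nhdsWithin] with t hP (ht : 0 < t)
  have h1 : 0 < lamt l1 t := one_pos.trans_le (one_le_lamt hl1 ht.le)
  have h2 : 0 < lamt l2 t := one_pos.trans_le (one_le_lamt hl2 ht.le)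
  rw [wfun_re h1]
  exact div_pos hP (wDenom_pos hβα h1 h2)

theorem wfun_one_re_nonpos (hl1 : 0 < l1) (hl2 : 0 < l2) (hβα : β < α)
    (hα : α ≤ (l1 + l2) / (1 + l1 * l2) * β) : (wfun l1 l2 α β 1).re ≤ 0 := by
  have h1 : 0 < lamt l1 1 := by rwa [lamt_one]
  have h2 : 0 < lamt l2 1 := by rwa [lamt_one]
  rw [div_mul_eq_mul_div, le_div_iff₀ (by positivity)] at hα
  rw [wfun_re h1, reNum_one]
  exact div_nonpos_of_nonpos_of_nonneg (by linarith) (wDenom_pos hβα h1 h2).le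

end ProductPath

theorem lemma28_case_minus_one_general (l1 l2 α β : ℝ) (hl1 : 1 < l1) (hl2 : 1 < l2)
    (Φ : ℝ → ℝ) (hΦc : ContinuousOn Φ (Set.Icc 0 1)) (hΦ0 : Φ 0 = 0)
    (hΦ : ∀ t ∈ Set.Icc (0 : ℝ) 1,
      Complex.exp (Complex.I * (Φ t : ℂ))
        = (wfun l1 l2 α β t / (‖wfun l1 l2 α β t‖ : ℂ)) ^ 2)
    (hcase : β < α ∧ α ≤ (l1 + l2) / (1 + l1 * l2) * β ∧
      (l1 + l2) / (1 + l1 * l2) * β < 0) :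
    Φ 1 ∈ Set.Ioc (-(2 * Real.pi)) (-Real.pi) := by
  obtain ⟨hβα, hα_le, hneg⟩ := hcase
  have hα : α < 0 := hα_le.trans_lt hneg
  have hαβ : 0 < α * β := mul_pos_of_neg_of_neg hα (hβα.trans hα)
  have him : ∀ t ∈ Ioc (0 : ℝ) 1, (wfun l1 l2 α β t).im < 0 :=
    fun t ht => wfun_im_neg hl1.le hl2 hβα hαβ ht.1
  refine mem_Ioc_neg_two_pi_neg_pi_of_lift one_pos hΦc hΦ0
    (fun t ht => cos_ne_one_of_exp_eq (hΦ t (Ioc_subset_Icc_self ht)) (him t ht).ne) ?_ ?_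
  · filter_upwards [Ioo_mem_nhdsGT one_pos, eventually_wfun_re_pos hl1.le hl2.le hβα]
      with t ht hre
    exact sin_neg_of_exp_eq (hΦ t (Ioo_subset_Icc_self ht))
      (mul_neg_of_pos_of_neg hre (him t (Ioo_subset_Ioc_self ht)))
  · exact sin_nonneg_of_exp_eq (hΦ 1 (right_mem_Icc.2 zero_le_one))
      (mul_nonneg_of_nonpos_of_nonpos (wfun_one_re_nonpos (by linarith) (by linarith) hβα hα_le)
        (him 1 (right_mem_Ioc.2 one_pos)).le)

/-- Case `−1` of Lemma 2.8: if `β < α ≤ ((λ₁+λ₂)/(1+λ₁λ₂))·β < 0` then `Φ(1) ∈ (−2π, −π]`. -/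
theorem lemma28_case_minus_one (l1 l2 α β : ℝ) (hl1 : 1 < l1) (hl2 : 1 < l2)
    (hα : α ≠ 0) (hβ : β ≠ 0) (hαβ : α ≠ β)
    (Φ : ℝ → ℝ) (hΦc : ContinuousOn Φ (Set.Icc 0 1)) (hΦ0 : Φ 0 = 0)
    (hΦ : ∀ t ∈ Set.Icc (0 : ℝ) 1,
      Complex.exp (Complex.I * (Φ t : ℂ))
        = (wfun l1 l2 α β t / (‖wfun l1 l2 α β t‖ : ℂ)) ^ 2)
    (hcase : β < α ∧ α ≤ (l1 + l2) / (1 + l1 * l2) * β ∧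
      (l1 + l2) / (1 + l1 * l2) * β < 0) :
    Φ 1 ∈ Set.Ioc (-(2 * Real.pi)) (-Real.pi) :=
  lemma28_case_minus_one_general l1 l2 α β hl1 hl2 Φ hΦc hΦ0 hΦ hcase
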